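/- For nonnegative integers n, q, r, the identity Σ_p C(r, n-p-r) · C(n-r, p) · C(p, q) = C(n-r, q) · C(n-q, r) holds (sum over all nonnegative integers p), which expresses the coefficient extraction in the expansion of Σ_{p,r} C(r, n-p-r)C(n-r, p)(z_1+1)^p z_2^r as a polynomial in z_1, z_2. -/

import Mathlib

/-- Key case: `r ≤ n`, written as `n = m + r`. -/
theorem stmt17_aux (m q r : ℕ) :
    ∑ p ∈ Finset.range (m + 1), r.choose (m - p) * m.choose p * p.choose q =
      m.choose q * (m + r - q).choose r := by
  rcases le_or_gt q m with hq | hq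
  · -- split off terms with p < q (they vanish)
    rw [Finset.range_eq_Ico, ← Finset.sum_Ico_consecutive _ (Nat.zero_le q) (by omega : q ≤ m + 1)]
    have h0 : ∑ p ∈ Finset.Ico 0 q, r.choose (m - p) * m.choose p * p.choose q = 0 := by
      apply Finset.sum_eq_zero
      intro p hp
      simp only [Finset.mem_Ico] at hp
      rw [Nat.choose_eq_zero_of_lt hp.2, Nat.mul_zero]
    rw [h0, Nat.zero_add]
    have h1 : ∀ p ∈ Finset.Ico q (m + 1),
        r.choose (m - p) * m.choose p * p.choose q
          = m.choose q * ((m - q).choose (p - q) * r.choose ((m - q) - (p - q))) := by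
      intro p hp
      simp only [Finset.mem_Ico] at hp
      calc r.choose (m - p) * m.choose p * p.choose q
          = m.choose p * p.choose q * r.choose (m - p) := by ring
        _ = m.choose q * (m - q).choose (p - q) * r.choose (m - p) := by
            rw [Nat.choose_mul hp.1]
        _ = m.choose q * ((m - q).choose (p - q) * r.choose ((m - q) - (p - q))) := by
            rw [show (m - q) - (p - q) = m - p by omega]; ring
    rw [Finset.sum_congr rfl h1, ← Finset.mul_sum]
    congr 1
    -- Vandermonde
    have hv := Nat.add_choose_eq (m - q) r (m - q)
    rw [Finset.Nat.sum_antidiagonal_eq_sum_range_succ_mk] at hv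
    have hsym : (m - q + r).choose (m - q) = (m + r - q).choose r := by
      rw [show m + r - q = m - q + r by omega, ← Nat.choose_symm (by omega : r ≤ m - q + r)]
      congr 1; omega
    rw [← hsym, hv]
    -- reindex p = q + j
    rw [show m + 1 = q + (m - q + 1) by omega, Finset.sum_Ico_eq_sum_range]
    apply Finset.sum_congr (by congr 1; omega)
    intro j hj
    simp only [Finset.mem_range] at hj
    congr 2 <;> omega
  · -- q > m : both sides zero
    rw [Nat.choose_eq_zero_of_lt hq, Nat.zero_mul]
    apply Finset.sum_eq_zero
    intro p hp
    simp only [Finset.mem_range] at hp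
    rw [Nat.choose_eq_zero_of_lt (show p < q by omega), Nat.mul_zero]

/-- For nonnegative integers `n, q, r`,
`∑_p C(r, n-p-r) C(n-r, p) C(p, q) = C(n-r, q) · C(n-q, r)`, the sum being over all
nonnegative integers `p` (the convention `C(a,b) = 0` for `b < 0` is encoded by the
condition `p + r ≤ n`; terms with `p > n` vanish since then `C(n-r,p) = 0`). -/
theorem stmt17 (n q r : ℕ) :
    ∑ p ∈ Finset.range (n + 1),
        (if p + r ≤ n then r.choose (n - p - r) * (n - r).choose p * p.choose q else 0) =
      (n - r).choose q * (n - q).choose r := by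
  rcases le_or_gt r n with hrn | hrn
  · obtain ⟨m, rfl⟩ : ∃ m, n = m + r := ⟨n - r, by omega⟩
    rw [show m + r - r = m by omega]
    rw [← Finset.sum_subset (Finset.range_subset_range.mpr (by omega : m + 1 ≤ m + r + 1))
        (fun p hp hp' => by
          simp only [Finset.mem_range] at hp hp'
          rw [if_neg (by omega)])]
    have hsub : ∀ p ∈ Finset.range (m + 1),
        (if p + r ≤ m + r then r.choose (m + r - p - r) * m.choose p * p.choose q else 0)
          = r.choose (m - p) * m.choose p * p.choose q := by
      intro p hp
      simp only [Finset.mem_range] at hp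
      rw [if_pos (by omega), show m + r - p - r = m - p by omega]
    rw [Finset.sum_congr rfl hsub]
    exact stmt17_aux m q r
  · have h0 : ∀ p ∈ Finset.range (n + 1),
        (if p + r ≤ n then r.choose (n - p - r) * (n - r).choose p * p.choose q else 0) = 0 := by
      intro p _
      rw [if_neg (by omega)]
    rw [Finset.sum_eq_zero h0, Nat.sub_eq_zero_of_le (le_of_lt hrn)]
    rcases Nat.eq_zero_or_pos q with rfl | hq
    · simp [Nat.choose_eq_zero_of_lt hrn]
    · simp [Nat.choose_eq_zero_of_lt hq]
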